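/- With the setup of the finite Dirichlet problem Δu = λe^u(e^u−1)^{2p+1} + h on Ω ⊂ ℤⁿ, u = 0 on ∂Ω: the solution u_Ω obtained as the limit of the monotone iteration is maximal, i.e., any function U on Ω̄ satisfying ΔU ≥ λe^U(e^U−1)^{2p+1} + h on Ω and U ≤ 0 on ∂Ω satisfies U ≤ u_Ω on Ω̄. -/

import Mathlib

open Finset

noncomputable section

/-- Vertices of the lattice graph `ℤⁿ`. -/
abbrev LV (n : ℕ) := Fin n → ℤ

/-- The set of neighbors of a vertex `x` in the lattice graph `ℤⁿ`
(the points differing from `x` by `±1` in exactly one coordinate). -/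
def latNbrs {n : ℕ} (x : LV n) : Finset (LV n) :=
  Finset.image (fun p : Fin n × Bool =>
    Function.update x p.1 (x p.1 + (if p.2 then 1 else -1))) Finset.univ

/-- The graph Laplacian on `ℤⁿ`: `Δu(x) = Σ_{y∼x} (u(y) - u(x))`. -/
def latLap {n : ℕ} (u : LV n → ℝ) (x : LV n) : ℝ :=
  ∑ y ∈ latNbrs x, (u y - u x)

/-- The boundary `∂Ω = {y ∉ Ω : ∃ x ∈ Ω, y ∼ x}` of a finite set `Ω ⊂ ℤⁿ`. -/
def latBdry {n : ℕ} (Ω : Finset (LV n)) : Finset (LV n) :=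
  Ω.biUnion latNbrs \ Ω

/-- The closure `Ω̄ = Ω ∪ ∂Ω`. -/
def latClosure {n : ℕ} (Ω : Finset (LV n)) : Finset (LV n) :=
  Ω ∪ latBdry Ω

/-- The bilinear Dirichlet form
`E_Ω(u,v) = (1/2) Σ_{x,y ∈ Ω̄, x∼y} (u(y)-u(x))(v(y)-v(x))`. -/
def latEnergy {n : ℕ} (Ω : Finset (LV n)) (u v : LV n → ℝ) : ℝ :=
  (1 / 2) * ∑ x ∈ latClosure Ω, ∑ y ∈ latNbrs x ∩ latClosure Ω,
    (u y - u x) * (v y - v x)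

/-- The source term `h = 4π Σ_{j=1}^M n_j δ_{p_j}`. -/
def chernH {n M : ℕ} (nj : Fin M → ℕ) (pts : Fin M → LV n) (x : LV n) : ℝ :=
  4 * Real.pi * ∑ j, (nj j : ℝ) * (if x = pts j then 1 else 0)

/-- The lattice graph `ℤⁿ`: `x ∼ y` iff `Σ_i |x_i - y_i| = 1`. -/
def latticeGraph (n : ℕ) : SimpleGraph (LV n) where
  Adj x y := ∑ i, (x i - y i).natAbs = 1
  symm := by
    constructor
    intro x y h
    have e : ∀ i, (y i - x i).natAbs = (x i - y i).natAbs := fun i => by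
      rw [← neg_sub, Int.natAbs_neg]
    simpa [e] using h
  loopless := by
    constructor
    intro x h
    simp at h

/-!
Instead of iterating, take for `u` a maximizer of `∑_{x ∈ Ω} U x` over the subsolutions `U`
that vanish off `Ω` and lie above a fixed subsolution `W`; by the maximum principle they are
`≤ 0`, so this set is compact. A subsolution `U` with `U ≤ 0` on `∂Ω` satisfies `U ≤ u` on `Ω`
because `1_Ω U ⊔ u` is again a competitor, and `u` solves the equation because where the
inequality were strict, `u` could be raised at that one point. For `W` take the barrier
`a((x_i)² - c)` cut off outside `Ω`: its lattice Laplacian is the constant `2a`.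
-/

open Filter Topology

section Lattice

variable {n : ℕ}

lemma self_notMem_latNbrs (x : LV n) : x ∉ latNbrs x := by
  simp only [latNbrs, mem_image, mem_univ, true_and, not_exists]
  rintro ⟨i, b⟩ hx
  have := congrFun hx i
  cases b <;> simp at this

lemma sum_latNbrs {β : Type*} [AddCommMonoid β] (x : LV n) (φ : LV n → β) :
    ∑ y ∈ latNbrs x, φ y =
      ∑ i, (φ (Function.update x i (x i + 1)) + φ (Function.update x i (x i - 1))) := by
  rw [latNbrs, sum_image, Fintype.sum_prod_type]
  · simp [sub_eq_add_neg]
  rintro ⟨i, b⟩ - ⟨j, c⟩ - hij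
  have hi := congrFun hij i
  by_cases h : i = j
  · subst h
    cases b <;> cases c <;> simp at hi ⊢
  · cases b <;> simp [Function.update_of_ne h] at hi

lemma latNbrs_subset_latClosure {Ω : Finset (LV n)} {x : LV n} (hx : x ∈ Ω) :
    latNbrs x ⊆ latClosure Ω := by
  intro y hy
  by_cases hyΩ : y ∈ Ω
  · exact mem_union_left _ hyΩ
  · exact mem_union_right _ (mem_sdiff.2 ⟨mem_biUnion.2 ⟨x, hx, hy⟩, hyΩ⟩)

lemma latLap_le_latLap {u v : LV n → ℝ} {x : LV n} (hx : u x = v x)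
    (h : ∀ y ∈ latNbrs x, u y ≤ v y) : latLap u x ≤ latLap v x :=
  sum_le_sum fun y hy => by linarith [h y hy]

lemma latLap_nonpos {u : LV n → ℝ} {x : LV n} (h : ∀ y ∈ latNbrs x, u y ≤ u x) :
    latLap u x ≤ 0 :=
  sum_nonpos fun y hy => by linarith [h y hy]

lemma latLap_update_self (u : LV n → ℝ) (x : LV n) (a : ℝ) :
    latLap (Function.update u x a) x = latLap u x - #(latNbrs x) * (a - u x) := by
  have hterm : ∀ y ∈ latNbrs x, Function.update u x a y - Function.update u x a x
      = (u y - u x) - (a - u x) := fun y hy => by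
    rw [Function.update_of_ne (ne_of_mem_of_not_mem hy (self_notMem_latNbrs x)),
      Function.update_self]
    ring
  rw [latLap, sum_congr rfl hterm, sum_sub_distrib, sum_const, nsmul_eq_mul, latLap]

lemma latLap_mul_coord_sq_sub (a c : ℝ) (i : Fin n) (x : LV n) :
    latLap (fun y => a * ((y i : ℝ) ^ 2 - c)) x = 2 * a := by
  rw [latLap, sum_latNbrs, sum_eq_single i]
  · simp only [Function.update_self, Int.cast_add, Int.cast_sub, Int.cast_one]
    ring
  · intro j _ hj
    simp [Function.update_of_ne hj.symm]
  · simp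

lemma continuous_latLap (x : LV n) : Continuous fun u : LV n → ℝ => latLap u x := by
  unfold latLap; fun_prop

end Lattice

section Subsolution

variable {n : ℕ} (Ω : Finset (LV n)) (f : ℝ → ℝ) (h : LV n → ℝ)

def IsSubsolution (U : LV n → ℝ) : Prop :=
  ∀ x ∈ Ω, f (U x) + h x ≤ latLap U x

variable {Ω f h}

lemma IsSubsolution.le_zero (hf : ∀ t, 0 < t → 0 < f t) (hh : ∀ x ∈ Ω, 0 ≤ h x)
    {U : LV n → ℝ} (hU : IsSubsolution Ω f h U) (hbd : ∀ x ∈ latBdry Ω, U x ≤ 0) :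
    ∀ x ∈ latClosure Ω, U x ≤ 0 := by
  by_contra! ⟨x, hx, hUx⟩
  obtain ⟨x₀, hx₀, hmax⟩ := (latClosure Ω).exists_max_image U ⟨x, hx⟩
  have hpos : 0 < U x₀ := hUx.trans_le (hmax x hx)
  have hx₀Ω : x₀ ∈ Ω := (mem_union.1 hx₀).resolve_right fun hb => (hbd x₀ hb).not_gt hpos
  have hlap := latLap_nonpos fun y hy => hmax y (latNbrs_subset_latClosure hx₀Ω hy)
  linarith [hU x₀ hx₀Ω, hf _ hpos, hh x₀ hx₀Ω]

lemma IsSubsolution.sup {U V : LV n → ℝ} (hU : IsSubsolution Ω f h U)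
    (hV : IsSubsolution Ω f h V) : IsSubsolution Ω f h (U ⊔ V) := by
  intro x hx
  rcases le_total (V x) (U x) with hle | hle
  · calc f ((U ⊔ V) x) + h x = f (U x) + h x := by rw [Pi.sup_apply, sup_of_le_left hle]
      _ ≤ latLap U x := hU x hx
      _ ≤ latLap (U ⊔ V) x := latLap_le_latLap (sup_of_le_left hle).symm fun y _ => le_sup_left
  · calc f ((U ⊔ V) x) + h x = f (V x) + h x := by rw [Pi.sup_apply, sup_of_le_right hle]
      _ ≤ latLap V x := hV x hx
      _ ≤ latLap (U ⊔ V) x := latLap_le_latLap (sup_of_le_right hle).symm fun y _ => le_sup_right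

lemma IsSubsolution.indicator {U : LV n → ℝ} (hU : IsSubsolution Ω f h U)
    (hbd : ∀ x ∈ latBdry Ω, U x ≤ 0) : IsSubsolution Ω f h ((Ω : Set (LV n)).indicator U) := by
  intro x hx
  have hUx : (Ω : Set (LV n)).indicator U x = U x := Set.indicator_of_mem hx U
  rw [hUx]
  refine (hU x hx).trans (latLap_le_latLap hUx.symm fun y hy => ?_)
  by_cases hyΩ : y ∈ Ω
  · rw [Set.indicator_of_mem (mem_coe.2 hyΩ)]
  · rw [Set.indicator_of_notMem (mem_coe.not.2 hyΩ)]
    exact hbd y (mem_sdiff.2 ⟨mem_biUnion.2 ⟨x, hx, hy⟩, hyΩ⟩)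

lemma IsSubsolution.exists_update (hf : Continuous f) {U : LV n → ℝ}
    (hU : IsSubsolution Ω f h U) {x₀ : LV n} (hlt : f (U x₀) + h x₀ < latLap U x₀) :
    ∃ ε > 0, IsSubsolution Ω f h (Function.update U x₀ (U x₀ + ε)) := by
  have hnear : ∀ᶠ ε in 𝓝 (0 : ℝ),
      f (U x₀ + ε) + h x₀ + #(latNbrs x₀) * ε < latLap U x₀ :=
    ContinuousAt.eventually_lt (by fun_prop) continuousAt_const (by simpa using hlt)
  obtain ⟨ε, hε, hεpos⟩ :=
    ((hnear.filter_mono nhdsWithin_le_nhds).and (self_mem_nhdsWithin (s := Set.Ioi 0))).exists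
  refine ⟨ε, hεpos, fun x hx => ?_⟩
  by_cases hxx₀ : x = x₀
  · subst hxx₀
    rw [Function.update_self, latLap_update_self]
    linarith
  · rw [Function.update_of_ne hxx₀]
    exact (hU x hx).trans (latLap_le_latLap (Function.update_of_ne hxx₀ _ _).symm
      fun y _ => le_update_self_iff.2 (by linarith) y)

lemma isClosed_setOf_isSubsolution (hf : Continuous f) :
    IsClosed {U | IsSubsolution Ω f h U} := by
  simp only [IsSubsolution, Set.ofPred_forall]
  exact isClosed_iInter fun x => isClosed_iInter fun _ =>
    isClosed_le (by fun_prop) (continuous_latLap x)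

lemma exists_isSubsolution (hn : 0 < n) (hf : ∀ t ≤ 0, f t ≤ 0) :
    ∃ W, IsSubsolution Ω f h W ∧ ∀ x ∉ Ω, W x = 0 := by
  let i : Fin n := ⟨0, hn⟩
  set a := ∑ x ∈ Ω, |h x|
  set c := ∑ y ∈ latClosure Ω, ((y i : ℝ)) ^ 2
  have ha : 0 ≤ a := sum_nonneg fun x _ => abs_nonneg _
  have hW : ∀ y ∈ latClosure Ω, a * ((y i : ℝ) ^ 2 - c) ≤ 0 := fun y hy =>
    mul_nonpos_of_nonneg_of_nonpos ha
      (sub_nonpos.2 (single_le_sum (f := fun y : LV n => ((y i : ℝ)) ^ 2)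
        (fun _ _ => sq_nonneg _) hy))
  have hsub : IsSubsolution Ω f h fun y => a * ((y i : ℝ) ^ 2 - c) := fun x hx => by
    rw [latLap_mul_coord_sq_sub]
    have hha : h x ≤ a := (le_abs_self _).trans
      (single_le_sum (f := fun x => |h x|) (fun _ _ => abs_nonneg _) hx)
    linarith [hf _ (hW x (mem_union_left _ hx))]
  exact ⟨_, hsub.indicator fun y hy => hW y (mem_union_right _ hy),
    fun x hx => Set.indicator_of_notMem (mem_coe.not.2 hx) _⟩

end Subsolution

lemma le_of_isMaxOn_sum {ι : Type*} {s : Finset ι} {S : Set (ι → ℝ)} {u v : ι → ℝ}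
    (hmax : IsMaxOn (fun U => ∑ x ∈ s, U x) S u) (hv : v ∈ S) (huv : u ≤ v) :
    ∀ x ∈ s, v x ≤ u x := by
  by_contra! ⟨x, hx, hlt⟩
  exact not_lt.2 (hmax hv) (sum_lt_sum (fun y _ => huv y) ⟨x, hx, hlt⟩)

section MaximalSolution

variable {n : ℕ} {Ω : Finset (LV n)} {f : ℝ → ℝ} {h : LV n → ℝ}

lemma isCompact_subsolutions (hf : Continuous f) (hf_pos : ∀ t, 0 < t → 0 < f t)
    (hh : ∀ x ∈ Ω, 0 ≤ h x) (W : LV n → ℝ) :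
    IsCompact {U | IsSubsolution Ω f h U ∧ W ≤ U ∧ ∀ x ∉ Ω, U x = 0} := by
  have hzero : IsClosed {U : LV n → ℝ | ∀ x ∉ Ω, U x = 0} := by
    simp only [Set.ofPred_forall]
    exact isClosed_iInter fun x => isClosed_iInter fun _ =>
      isClosed_eq (continuous_apply x) continuous_const
  refine (isCompact_univ_pi fun x => isCompact_Icc (a := W x) (b := 0)).of_isClosed_subset
    ((isClosed_setOf_isSubsolution hf).inter (isClosed_Ici.inter hzero)) ?_
  rintro U ⟨hU, hWU, hU0⟩ x -
  refine ⟨hWU x, ?_⟩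
  by_cases hx : x ∈ Ω
  · exact hU.le_zero hf_pos hh (fun y hy => (hU0 y (mem_sdiff.1 hy).2).le) x (mem_union_left _ hx)
  · exact (hU0 x hx).le

theorem exists_maximal_solution (hn : 0 < n) (hf : Continuous f)
    (hf_pos : ∀ t, 0 < t → 0 < f t) (hf_nonpos : ∀ t ≤ 0, f t ≤ 0) (hh : ∀ x ∈ Ω, 0 ≤ h x) :
    ∃ u : LV n → ℝ, (∀ x ∈ Ω, latLap u x = f (u x) + h x) ∧ (∀ x ∈ latBdry Ω, u x = 0) ∧
      ∀ U, IsSubsolution Ω f h U → (∀ x ∈ latBdry Ω, U x ≤ 0) →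
        ∀ x ∈ latClosure Ω, U x ≤ u x := by
  obtain ⟨W, hW, hW0⟩ := exists_isSubsolution hn hf_nonpos
  obtain ⟨u, ⟨hu, hWu, hu0⟩, hmax⟩ := (isCompact_subsolutions hf hf_pos hh W).exists_isMaxOn
    ⟨W, hW, le_rfl, hW0⟩ (continuous_finsetSum Ω fun x _ => continuous_apply x).continuousOn
  have hsol : ∀ x ∈ Ω, latLap u x = f (u x) + h x := by
    refine fun x hx => ((hu x hx).lt_or_eq).elim (fun hlt => ?_) Eq.symm
    obtain ⟨ε, hε, hv⟩ := hu.exists_update hf hlt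
    have hraise : u ≤ Function.update u x (u x + ε) := le_update_self_iff.2 (by linarith)
    have hle := le_of_isMaxOn_sum hmax ⟨hv, hWu.trans hraise, fun y hy => by
      rw [Function.update_of_ne (ne_of_mem_of_not_mem hx hy).symm, hu0 y hy]⟩ hraise x hx
    rw [Function.update_self] at hle
    linarith
  refine ⟨u, hsol, fun x hx => hu0 x (mem_sdiff.1 hx).2, fun U hU hbd x hx => ?_⟩
  rcases mem_union.1 hx with hxΩ | hxb
  · have hV : (Ω : Set (LV n)).indicator U ⊔ u ∈
        {U | IsSubsolution Ω f h U ∧ W ≤ U ∧ ∀ x ∉ Ω, U x = 0} :=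
      ⟨(hU.indicator hbd).sup hu, hWu.trans le_sup_right, fun y hy => by
        simp [Set.indicator_of_notMem (mem_coe.not.2 hy), hu0 y hy]⟩
    calc U x = (Ω : Set (LV n)).indicator U x := (Set.indicator_of_mem hxΩ U).symm
      _ ≤ ((Ω : Set (LV n)).indicator U ⊔ u) x := le_sup_left
      _ ≤ u x := le_of_isMaxOn_sum hmax hV le_sup_right x hxΩ
  · rw [hu0 x (mem_sdiff.1 hxb).2]
    exact hbd x hxb

end MaximalSolution

theorem dirichlet_maximal_solution_general (n : ℕ) (hn : 2 ≤ n) (lam : ℝ) (hlam : 0 < lam) (p : ℕ)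
    (M : ℕ) (nj : Fin M → ℕ) (pts : Fin M → LV n)
    (Ω : Finset (LV n)) :
    ∃ u : LV n → ℝ,
      (∀ x ∈ Ω, latLap u x
          = lam * Real.exp (u x) * (Real.exp (u x) - 1) ^ (2 * p + 1) + chernH nj pts x) ∧
      (∀ x ∈ latBdry Ω, u x = 0) ∧
      ∀ U : LV n → ℝ,
        (∀ x ∈ Ω, lam * Real.exp (U x) * (Real.exp (U x) - 1) ^ (2 * p + 1) + chernH nj pts x
            ≤ latLap U x) →
        (∀ x ∈ latBdry Ω, U x ≤ 0) →
        ∀ x ∈ latClosure Ω, U x ≤ u x := by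
  have hf_pos (t : ℝ) (ht : 0 < t) : 0 < lam * Real.exp t * (Real.exp t - 1) ^ (2 * p + 1) := by
    have : 0 < Real.exp t - 1 := sub_pos.2 (Real.one_lt_exp_iff.2 ht)
    positivity
  have hf_nonpos (t : ℝ) (ht : t ≤ 0) :
      lam * Real.exp t * (Real.exp t - 1) ^ (2 * p + 1) ≤ 0 :=
    mul_nonpos_of_nonneg_of_nonpos (by positivity)
      (Odd.pow_nonpos (odd_two_mul_add_one p) (sub_nonpos.2 (Real.exp_le_one_iff.2 ht)))
  have hh (x : LV n) : 0 ≤ chernH nj pts x := by unfold chernH; positivity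
  exact exists_maximal_solution (by omega) (by fun_prop) hf_pos hf_nonpos fun x _ => hh x

/-- The finite Dirichlet problem `Δu = λe^u(e^u-1)^{2p+1} + h` on `Ω`, `u = 0` on `∂Ω`,
admits a maximal solution `u_Ω`: any `U` with `ΔU ≥ λe^U(e^U-1)^{2p+1} + h` on `Ω` and
`U ≤ 0` on `∂Ω` satisfies `U ≤ u_Ω` on `Ω̄`. -/
theorem dirichlet_maximal_solution (n : ℕ) (hn : 2 ≤ n) (lam : ℝ) (hlam : 0 < lam) (p : ℕ)
    (M : ℕ) (nj : Fin M → ℕ) (hnj : ∀ j, 0 < nj j) (pts : Fin M → LV n)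
    (Ω : Finset (LV n)) (hpts : ∀ j, pts j ∈ Ω)
    (hconn : ((latticeGraph n).induce (↑Ω : Set (LV n))).Connected) :
    ∃ u : LV n → ℝ,
      (∀ x ∈ Ω, latLap u x
          = lam * Real.exp (u x) * (Real.exp (u x) - 1) ^ (2 * p + 1) + chernH nj pts x) ∧
      (∀ x ∈ latBdry Ω, u x = 0) ∧
      ∀ U : LV n → ℝ,
        (∀ x ∈ Ω, lam * Real.exp (U x) * (Real.exp (U x) - 1) ^ (2 * p + 1) + chernH nj pts x
            ≤ latLap U x) →
        (∀ x ∈ latBdry Ω, U x ≤ 0) →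
        ∀ x ∈ latClosure Ω, U x ≤ u x :=
  dirichlet_maximal_solution_general n hn lam hlam p M nj pts Ω
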